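/- Let H be a Hopf algebra and F ∈ H⊗H a 2-cocycle twist (invertible, satisfying F₁₂(Δ⊗id)(F) = F₂₃(id⊗Δ)(F) and (ε⊗id)(F) = 1 = (id⊗ε)(F)). Then H^F := (H, μ, Δ^F, S^F, ε) with Δ^F(ξ) = F Δ(ξ) F⁻¹ and S^F(ξ) = χ S(ξ) χ⁻¹, where χ = f^α S(f_α) for F = f^α ⊗ f_α, is again a Hopf algebra. -/

import Mathlib

/-!
Write `Φ = F₁₂ (Δ ⊗ id)(F) = F₂₃ (id ⊗ Δ)(F)`. Inverting the cocycle identity gives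
`(Δ ⊗ id)(F⁻¹) F₁₂⁻¹ = (id ⊗ Δ)(F⁻¹) F₂₃⁻¹ = Φ⁻¹`, so both iterated twisted coproducts are
`Φ ((Δ ⊗ id) ∘ Δ) Φ⁻¹`, and coassociativity of `Δ^F` follows from that of `Δ`. The counit laws
hold because `ε ⊗ id` and `id ⊗ ε` are algebra maps sending `F`, hence `F⁻¹`, to `1`.

For `χ χ⁻¹ = 1` apply `x ⊗ y ⊗ z ↦ x S(y) z` to the rearranged cocycle
`F₂₃⁻¹ F₁₂ = (id ⊗ Δ)(F) (Δ ⊗ id)(F⁻¹)`: the left side gives `χ χ⁻¹`, the right side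
`(id ⊗ ε)(F) (ε ⊗ id)(F⁻¹) = 1`. Mirror-symmetrically, `x ⊗ y ⊗ z ↦ S(x) y S(z)` applied to
`F₁₂⁻¹ F₂₃ = (Δ ⊗ id)(F) (id ⊗ Δ)(F⁻¹)` gives `χ⁻¹ χ = 1`.

For the antipode axioms, the maps `x ⊗ y ↦ S(x) c y` and `x ⊗ y ↦ x c S(y)` turn products in
`H ⊗ H` into iterated substitution for `c`, because `S` is an antihomomorphism. Evaluated on
`F Δ(ξ) F⁻¹` they reduce to `F⁻¹ F = 1`, the antipode axiom of `H`, and `χ χ⁻¹ = 1`.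
-/

open TensorProduct

noncomputable section

variable (K : Type*) [CommRing K] (H : Type*) [Ring H] [HopfAlgebra K H]

namespace TwistPaper

def muH : H ⊗[K] H →ₗ[K] H := LinearMap.mul' K H

def ΔH : H →ₗ[K] H ⊗[K] H := Coalgebra.comul

def εH : H →ₗ[K] K := Coalgebra.counit

def SH : H →ₗ[K] H := HopfAlgebra.antipode (R := K)

/-- `x ⊗ y ↦ x ⊗ (y ⊗ 1)`, i.e. `F ↦ F₁₂` inside `H ⊗ H ⊗ H`. -/
def ins3 : H ⊗[K] H →ₗ[K] H ⊗[K] (H ⊗[K] H) :=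
  LinearMap.lTensor H ((TensorProduct.mk K H H).flip 1)

/-- `F ↦ F₂₃ = 1 ⊗ F`. -/
def ins1 : H ⊗[K] H →ₗ[K] H ⊗[K] (H ⊗[K] H) :=
  TensorProduct.mk K H (H ⊗[K] H) 1

/-- `(Δ ⊗ id)` as a map `H ⊗ H → H ⊗ (H ⊗ H)`. -/
def comulLeft : H ⊗[K] H →ₗ[K] H ⊗[K] (H ⊗[K] H) :=
  (TensorProduct.assoc K H H H).toLinearMap ∘ₗ (ΔH K H).rTensor H

/-- `(id ⊗ Δ)` as a map `H ⊗ H → H ⊗ (H ⊗ H)`. -/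
def comulRight : H ⊗[K] H →ₗ[K] H ⊗[K] (H ⊗[K] H) :=
  (ΔH K H).lTensor H

/-- `(ε ⊗ id) : H ⊗ H → H`. -/
def counitLeft : H ⊗[K] H →ₗ[K] H :=
  (TensorProduct.lid K H).toLinearMap ∘ₗ (εH K H).rTensor H

/-- `(id ⊗ ε) : H ⊗ H → H`. -/
def counitRight : H ⊗[K] H →ₗ[K] H :=
  (TensorProduct.rid K H).toLinearMap ∘ₗ (εH K H).lTensor H

/-- `χ = f^α S(f_α)` for `F = f^α ⊗ f_α`. -/
def chi (F : H ⊗[K] H) : H := muH K H ((SH K H).lTensor H F)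

/-- `χ⁻¹ = S(f̄^α) f̄_α` for `F⁻¹ = f̄^α ⊗ f̄_α`. -/
def chiInv (Finv : H ⊗[K] H) : H := muH K H ((SH K H).rTensor H Finv)

structure IsTwist (F Finv : H ⊗[K] H) : Prop where
  mul_inv : F * Finv = 1
  inv_mul : Finv * F = 1
  cocycle : ins3 K H F * comulLeft K H F = ins1 K H F * comulRight K H F
  counit_left : counitLeft K H F = 1
  counit_right : counitRight K H F = 1

/-- The twisted coproduct `Δ^F(ξ) = F Δ(ξ) F⁻¹`. -/
def twistComul (F Finv : H ⊗[K] H) : H →ₗ[K] H ⊗[K] H :=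
  LinearMap.mulLeft K F ∘ₗ LinearMap.mulRight K Finv ∘ₗ ΔH K H

/-- The twisted antipode `S^F(ξ) = χ S(ξ) χ⁻¹`. -/
def twistAntipode (F Finv : H ⊗[K] H) : H →ₗ[K] H :=
  LinearMap.mulLeft K (chi K H F) ∘ₗ LinearMap.mulRight K (chiInv K H Finv) ∘ₗ SH K H

lemma inv_mul_eq_mul_inv_of_mul_eq {M : Type*} [Monoid M] {a b c d b' c' : M}
    (h : a * b = c * d) (hc : c' * c = 1) (hb : b * b' = 1) : c' * a = d * b' :=
  calc c' * a = c' * (a * b) * b' := by rw [mul_assoc, mul_assoc, hb, mul_one]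
    _ = d * b' := by rw [h, ← mul_assoc, hc, one_mul]

lemma mul_inv_rev_eq_of_mul_eq {M : Type*} [Monoid M] {a b c d a' b' c' d' : M}
    (h : a * b = c * d) (ha : a' * a = 1) (hb : b' * b = 1) (hc : c * c' = 1)
    (hd : d * d' = 1) : b' * a' = d' * c' :=
  left_inv_eq_right_inv (a := a * b)
    (by rw [mul_assoc, ← mul_assoc a', ha, one_mul, hb])
    (by rw [h, mul_assoc, ← mul_assoc d, hd, one_mul, hc])

section AntipodeMul

variable {R A : Type*} [CommSemiring R] [Semiring A] [HopfAlgebra R A]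

open HopfAlgebra Coalgebra

def antipodeMulMul (c : A) : A ⊗[R] A →ₗ[R] A :=
  LinearMap.mul' R A ∘ₗ TensorProduct.map (LinearMap.mulRight R c ∘ₗ antipode R) LinearMap.id

def mulMulAntipode (c : A) : A ⊗[R] A →ₗ[R] A :=
  LinearMap.mul' R A ∘ₗ TensorProduct.map (LinearMap.mulRight R c) (antipode R)

@[simp]
lemma antipodeMulMul_tmul (c x y : A) :
    antipodeMulMul c (x ⊗ₜ[R] y) = antipode R x * c * y := rfl

@[simp]
lemma mulMulAntipode_tmul (c x y : A) :
    mulMulAntipode c (x ⊗ₜ[R] y) = x * c * antipode R y := rfl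

lemma antipodeMulMul_mul (c : A) (X Y : A ⊗[R] A) :
    antipodeMulMul c (X * Y) = antipodeMulMul (antipodeMulMul c X) Y := by
  induction Y using TensorProduct.induction_on with
  | zero => simp
  | add Y₁ Y₂ h₁ h₂ => simp only [mul_add, map_add, h₁, h₂]
  | tmul y₁ y₂ =>
    rw [antipodeMulMul_tmul]
    induction X using TensorProduct.induction_on with
    | zero => simp
    | add X₁ X₂ h₁ h₂ => simp only [add_mul, map_add, h₁, h₂, mul_add]
    | tmul x₁ x₂ => simp [antipode_mul_antidistrib, mul_assoc]

lemma mulMulAntipode_mul (c : A) (X Y : A ⊗[R] A) :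
    mulMulAntipode c (X * Y) = mulMulAntipode (mulMulAntipode c Y) X := by
  induction X using TensorProduct.induction_on with
  | zero => simp
  | add X₁ X₂ h₁ h₂ => simp only [add_mul, map_add, h₁, h₂]
  | tmul x₁ x₂ =>
    rw [mulMulAntipode_tmul]
    induction Y using TensorProduct.induction_on with
    | zero => simp
    | add Y₁ Y₂ h₁ h₂ => simp only [mul_add, map_add, h₁, h₂, add_mul]
    | tmul y₁ y₂ => simp [antipode_mul_antidistrib, mul_assoc]

@[simp]
lemma antipodeMulMul_one_right (c : A) : antipodeMulMul c (1 : A ⊗[R] A) = c := by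
  simp [Algebra.TensorProduct.one_def]

@[simp]
lemma mulMulAntipode_one_right (c : A) : mulMulAntipode c (1 : A ⊗[R] A) = c := by
  simp [Algebra.TensorProduct.one_def]

lemma antipodeMulMul_one :
    antipodeMulMul (1 : A) = LinearMap.mul' R A ∘ₗ (antipode R).rTensor A :=
  TensorProduct.ext' fun x y => by simp

lemma mulMulAntipode_one :
    mulMulAntipode (1 : A) = LinearMap.mul' R A ∘ₗ (antipode R).lTensor A :=
  TensorProduct.ext' fun x y => by simp

lemma antipodeMulMul_one_comul (a : A) :
    antipodeMulMul 1 (comul (R := R) a) = algebraMap R A (counit a) := by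
  rw [antipodeMulMul_one]
  exact mul_antipode_rTensor_comul_apply a

lemma mulMulAntipode_one_comul (a : A) :
    mulMulAntipode 1 (comul (R := R) a) = algebraMap R A (counit a) := by
  rw [mulMulAntipode_one]
  exact mul_antipode_lTensor_comul_apply a

lemma antipodeMulMul_algebraMap (r : R) (W : A ⊗[R] A) :
    antipodeMulMul (algebraMap R A r) W = r • antipodeMulMul 1 W := by
  induction W using TensorProduct.induction_on with
  | zero => simp
  | add W₁ W₂ h₁ h₂ => simp only [map_add, h₁, h₂, smul_add]
  | tmul x y => simp [Algebra.commutes, Algebra.smul_def, mul_assoc]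

lemma mulMulAntipode_algebraMap (r : R) (W : A ⊗[R] A) :
    mulMulAntipode (algebraMap R A r) W = r • mulMulAntipode 1 W := by
  induction W using TensorProduct.induction_on with
  | zero => simp
  | add W₁ W₂ h₁ h₂ => simp only [map_add, h₁, h₂, smul_add]
  | tmul x y => simp [Algebra.commutes, Algebra.smul_def, mul_assoc]

def mulAntipodeMul : A ⊗[R] (A ⊗[R] A) →ₗ[R] A :=
  LinearMap.mul' R A ∘ₗ (antipodeMulMul 1).lTensor A

def antipodeMulAntipode : A ⊗[R] (A ⊗[R] A) →ₗ[R] A :=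
  LinearMap.mul' R A ∘ₗ TensorProduct.map (antipode R) (mulMulAntipode 1)

@[simp]
lemma mulAntipodeMul_tmul (x : A) (W : A ⊗[R] A) :
    mulAntipodeMul (x ⊗ₜ W) = x * antipodeMulMul 1 W := rfl

@[simp]
lemma antipodeMulAntipode_tmul (x : A) (W : A ⊗[R] A) :
    antipodeMulAntipode (x ⊗ₜ W) = antipode R x * mulMulAntipode 1 W := rfl

end AntipodeMul

section Twist

variable {K H}

open Coalgebra

lemma ins3_eq_algHom : ins3 K H =
    (Algebra.TensorProduct.map (AlgHom.id K H) Algebra.TensorProduct.includeLeft).toLinearMap :=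
  TensorProduct.ext' fun _ _ => rfl

lemma comulLeft_eq_algHom : comulLeft K H =
    ((Algebra.TensorProduct.assoc K K K H H H).toAlgHom.comp
      (Algebra.TensorProduct.map (Bialgebra.comulAlgHom K H) (AlgHom.id K H))).toLinearMap :=
  TensorProduct.ext' fun _ _ => rfl

lemma comulRight_eq_algHom : comulRight K H =
    (Algebra.TensorProduct.map (AlgHom.id K H) (Bialgebra.comulAlgHom K H)).toLinearMap :=
  TensorProduct.ext' fun _ _ => rfl

lemma counitLeft_eq_algHom : counitLeft K H =
    ((Algebra.TensorProduct.lid K H).toAlgHom.comp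
      (Algebra.TensorProduct.map (Bialgebra.counitAlgHom K H) (AlgHom.id K H))).toLinearMap :=
  TensorProduct.ext' fun _ _ => rfl

lemma counitRight_eq_algHom : counitRight K H =
    ((Algebra.TensorProduct.rid K K H).toAlgHom.comp
      (Algebra.TensorProduct.map (AlgHom.id K H) (Bialgebra.counitAlgHom K H))).toLinearMap :=
  TensorProduct.ext' fun _ _ => rfl

lemma ins3_mul (X Y : H ⊗[K] H) : ins3 K H (X * Y) = ins3 K H X * ins3 K H Y := by
  simp only [ins3_eq_algHom, AlgHom.toLinearMap_apply, map_mul]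

lemma ins3_one : ins3 K H 1 = 1 := by
  simp only [ins3_eq_algHom, AlgHom.toLinearMap_apply, map_one]

lemma ins1_mul (X Y : H ⊗[K] H) : ins1 K H (X * Y) = ins1 K H X * ins1 K H Y :=
  map_mul Algebra.TensorProduct.includeRight X Y

lemma ins1_one : ins1 K H 1 = 1 :=
  map_one Algebra.TensorProduct.includeRight

lemma comulLeft_mul (X Y : H ⊗[K] H) :
    comulLeft K H (X * Y) = comulLeft K H X * comulLeft K H Y := by
  simp only [comulLeft_eq_algHom, AlgHom.toLinearMap_apply, map_mul]

lemma comulLeft_one : comulLeft K H 1 = 1 := by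
  simp only [comulLeft_eq_algHom, AlgHom.toLinearMap_apply, map_one]

lemma comulRight_mul (X Y : H ⊗[K] H) :
    comulRight K H (X * Y) = comulRight K H X * comulRight K H Y := by
  simp only [comulRight_eq_algHom, AlgHom.toLinearMap_apply, map_mul]

lemma comulRight_one : comulRight K H 1 = 1 := by
  simp only [comulRight_eq_algHom, AlgHom.toLinearMap_apply, map_one]

lemma counitLeft_mul (X Y : H ⊗[K] H) :
    counitLeft K H (X * Y) = counitLeft K H X * counitLeft K H Y := by
  simp only [counitLeft_eq_algHom, AlgHom.toLinearMap_apply, map_mul]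

lemma counitRight_mul (X Y : H ⊗[K] H) :
    counitRight K H (X * Y) = counitRight K H X * counitRight K H Y := by
  simp only [counitRight_eq_algHom, AlgHom.toLinearMap_apply, map_mul]

lemma counitLeft_one : counitLeft K H 1 = 1 := by
  simp only [counitLeft_eq_algHom, AlgHom.toLinearMap_apply, map_one]

lemma counitRight_one : counitRight K H 1 = 1 := by
  simp only [counitRight_eq_algHom, AlgHom.toLinearMap_apply, map_one]

@[simp]
lemma counitLeft_tmul (x y : H) : counitLeft K H (x ⊗ₜ y) = counit (R := K) x • y := rfl

@[simp]
lemma counitRight_tmul (x y : H) : counitRight K H (x ⊗ₜ y) = counit (R := K) y • x := rfl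

lemma counitLeft_comul (a : H) : counitLeft K H (ΔH K H a) = a := by
  simp only [counitLeft, ΔH, εH, LinearMap.comp_apply, LinearEquiv.coe_coe,
    Coalgebra.rTensor_counit_comul, TensorProduct.lid_tmul, one_smul]

lemma counitRight_comul (a : H) : counitRight K H (ΔH K H a) = a := by
  simp only [counitRight, ΔH, εH, LinearMap.comp_apply, LinearEquiv.coe_coe,
    Coalgebra.lTensor_counit_comul, TensorProduct.rid_tmul, one_smul]

lemma assoc_mul (X Y : (H ⊗[K] H) ⊗[K] H) :
    TensorProduct.assoc K H H H (X * Y) =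
      TensorProduct.assoc K H H H X * TensorProduct.assoc K H H H Y :=
  map_mul (Algebra.TensorProduct.assoc K K K H H H) X Y

lemma assoc_tmul_one (W : H ⊗[K] H) : TensorProduct.assoc K H H H (W ⊗ₜ 1) = ins3 K H W :=
  LinearMap.congr_fun (f := TensorProduct.assoc K H H H ∘ₗ (TensorProduct.mk K _ H).flip 1)
    (g := ins3 K H) (TensorProduct.ext' fun _ _ => rfl) W

lemma chi_eq_mulMulAntipode (W : H ⊗[K] H) : chi K H W = mulMulAntipode 1 W := by
  rw [mulMulAntipode_one]; rfl

lemma chiInv_eq_antipodeMulMul (W : H ⊗[K] H) : chiInv K H W = antipodeMulMul 1 W := by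
  rw [antipodeMulMul_one]; rfl

lemma mulAntipodeMul_ins1_mul_ins3 (X Y : H ⊗[K] H) :
    mulAntipodeMul (ins1 K H Y * ins3 K H X) = chi K H X * chiInv K H Y := by
  rw [chi_eq_mulMulAntipode, chiInv_eq_antipodeMulMul]
  induction X using TensorProduct.induction_on with
  | zero => simp
  | add X₁ X₂ h₁ h₂ => simp only [mul_add, map_add, add_mul, h₁, h₂]
  | tmul x y =>
    change mulAntipodeMul ((1 ⊗ₜ Y) * (x ⊗ₜ (y ⊗ₜ 1))) = _
    rw [Algebra.TensorProduct.tmul_mul_tmul, one_mul, mulAntipodeMul_tmul, antipodeMulMul_mul]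
    simp [mul_assoc]

lemma antipodeMulAntipode_ins3_mul_ins1 (X Y : H ⊗[K] H) :
    antipodeMulAntipode (ins3 K H Y * ins1 K H X) = chiInv K H Y * chi K H X := by
  rw [chi_eq_mulMulAntipode, chiInv_eq_antipodeMulMul]
  induction Y using TensorProduct.induction_on with
  | zero => simp
  | add Y₁ Y₂ h₁ h₂ => simp only [add_mul, map_add, h₁, h₂]
  | tmul x y =>
    change antipodeMulAntipode ((x ⊗ₜ (y ⊗ₜ 1)) * (1 ⊗ₜ X)) = _
    rw [Algebra.TensorProduct.tmul_mul_tmul, mul_one, antipodeMulAntipode_tmul, mulMulAntipode_mul]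
    simp [mul_assoc]

lemma mulAntipodeMul_tmul_mul_assoc (f v : H) (P Q : H ⊗[K] H) :
    mulAntipodeMul ((f ⊗ₜ Q) * TensorProduct.assoc K H H H (P ⊗ₜ v)) =
      f * chi K H P * chiInv K H Q * v := by
  rw [chi_eq_mulMulAntipode, chiInv_eq_antipodeMulMul]
  induction P using TensorProduct.induction_on with
  | zero => simp
  | add P₁ P₂ h₁ h₂ => simp only [TensorProduct.add_tmul, map_add, mul_add, add_mul, h₁, h₂]
  | tmul p₁ p₂ =>
    rw [TensorProduct.assoc_tmul, Algebra.TensorProduct.tmul_mul_tmul, mulAntipodeMul_tmul,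
      antipodeMulMul_mul]
    simp [mul_assoc]

lemma antipodeMulAntipode_assoc_mul_tmul (f g : H) (P Q : H ⊗[K] H) :
    antipodeMulAntipode (TensorProduct.assoc K H H H (P ⊗ₜ g) * (f ⊗ₜ Q)) =
      HopfAlgebra.antipode K f * chiInv K H P * chi K H Q * HopfAlgebra.antipode K g := by
  rw [chi_eq_mulMulAntipode, chiInv_eq_antipodeMulMul]
  induction P using TensorProduct.induction_on with
  | zero => simp
  | add P₁ P₂ h₁ h₂ => simp only [TensorProduct.add_tmul, map_add, add_mul, mul_add, h₁, h₂]
  | tmul p₁ p₂ =>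
    rw [TensorProduct.assoc_tmul, Algebra.TensorProduct.tmul_mul_tmul, antipodeMulAntipode_tmul,
      mulMulAntipode_mul]
    simp [HopfAlgebra.antipode_mul_antidistrib, mul_assoc]

lemma mulAntipodeMul_comulRight_mul_comulLeft (X Y : H ⊗[K] H) :
    mulAntipodeMul (comulRight K H X * comulLeft K H Y) = counitRight K H X * counitLeft K H Y := by
  induction X using TensorProduct.induction_on with
  | zero => simp
  | add X₁ X₂ h₁ h₂ => simp only [map_add, add_mul, h₁, h₂]
  | tmul f g =>
    induction Y using TensorProduct.induction_on with
    | zero => simp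
    | add Y₁ Y₂ h₁ h₂ => simp only [map_add, mul_add, h₁, h₂]
    | tmul u v =>
      change mulAntipodeMul ((f ⊗ₜ comul g) * TensorProduct.assoc K H H H (comul u ⊗ₜ v)) = _
      rw [mulAntipodeMul_tmul_mul_assoc, chi_eq_mulMulAntipode, mulMulAntipode_one_comul,
        chiInv_eq_antipodeMulMul, antipodeMulMul_one_comul]
      simp only [counitLeft_tmul, counitRight_tmul, Algebra.algebraMap_eq_smul_one,
        mul_smul_comm, smul_mul_assoc, mul_one, smul_smul, mul_comm]

lemma antipodeMulAntipode_comulLeft_mul_comulRight (X Y : H ⊗[K] H) :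
    antipodeMulAntipode (comulLeft K H X * comulRight K H Y) =
      HopfAlgebra.antipode K (counitRight K H Y) * HopfAlgebra.antipode K (counitLeft K H X) := by
  induction X using TensorProduct.induction_on with
  | zero => simp
  | add X₁ X₂ h₁ h₂ => simp only [map_add, add_mul, mul_add, h₁, h₂]
  | tmul f g =>
    induction Y using TensorProduct.induction_on with
    | zero => simp
    | add Y₁ Y₂ h₁ h₂ => simp only [map_add, mul_add, add_mul, h₁, h₂]
    | tmul u v =>
      change antipodeMulAntipode (TensorProduct.assoc K H H H (comul f ⊗ₜ g) * (u ⊗ₜ comul v)) = _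
      rw [antipodeMulAntipode_assoc_mul_tmul, chi_eq_mulMulAntipode, mulMulAntipode_one_comul,
        chiInv_eq_antipodeMulMul, antipodeMulMul_one_comul]
      simp only [counitLeft_tmul, counitRight_tmul, map_smul, Algebra.algebraMap_eq_smul_one,
        mul_smul_comm, smul_mul_assoc, mul_one, smul_smul, mul_comm]

end Twist

namespace IsTwist

variable {K H} {F Finv : H ⊗[K] H}

lemma counitLeft_inv (hF : IsTwist K H F Finv) : counitLeft K H Finv = 1 :=
  calc counitLeft K H Finv = counitLeft K H F * counitLeft K H Finv := by
        rw [hF.counit_left, one_mul]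
    _ = 1 := by rw [← counitLeft_mul, hF.mul_inv, counitLeft_one]

lemma counitRight_inv (hF : IsTwist K H F Finv) : counitRight K H Finv = 1 :=
  calc counitRight K H Finv = counitRight K H F * counitRight K H Finv := by
        rw [hF.counit_right, one_mul]
    _ = 1 := by rw [← counitRight_mul, hF.mul_inv, counitRight_one]

lemma cocycle_inv (hF : IsTwist K H F Finv) :
    comulLeft K H Finv * ins3 K H Finv = comulRight K H Finv * ins1 K H Finv :=
  mul_inv_rev_eq_of_mul_eq hF.cocycle (by rw [← ins3_mul, hF.inv_mul, ins3_one])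
    (by rw [← comulLeft_mul, hF.inv_mul, comulLeft_one])
    (by rw [← ins1_mul, hF.mul_inv, ins1_one])
    (by rw [← comulRight_mul, hF.mul_inv, comulRight_one])

lemma ins1_inv_mul_ins3 (hF : IsTwist K H F Finv) :
    ins1 K H Finv * ins3 K H F = comulRight K H F * comulLeft K H Finv :=
  inv_mul_eq_mul_inv_of_mul_eq hF.cocycle (by rw [← ins1_mul, hF.inv_mul, ins1_one])
    (by rw [← comulLeft_mul, hF.mul_inv, comulLeft_one])

lemma ins3_inv_mul_ins1 (hF : IsTwist K H F Finv) :
    ins3 K H Finv * ins1 K H F = comulLeft K H F * comulRight K H Finv :=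
  inv_mul_eq_mul_inv_of_mul_eq hF.cocycle.symm (by rw [← ins3_mul, hF.inv_mul, ins3_one])
    (by rw [← comulRight_mul, hF.mul_inv, comulRight_one])

lemma chi_mul_chiInv (hF : IsTwist K H F Finv) : chi K H F * chiInv K H Finv = 1 := by
  rw [← mulAntipodeMul_ins1_mul_ins3, hF.ins1_inv_mul_ins3,
    mulAntipodeMul_comulRight_mul_comulLeft, hF.counit_right, hF.counitLeft_inv, one_mul]

lemma chiInv_mul_chi (hF : IsTwist K H F Finv) : chiInv K H Finv * chi K H F = 1 := by
  rw [← antipodeMulAntipode_ins3_mul_ins1, hF.ins3_inv_mul_ins1,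
    antipodeMulAntipode_comulLeft_mul_comulRight, hF.counitRight_inv, hF.counit_left,
    HopfAlgebra.antipode_one, one_mul]

end IsTwist

section TwistedStructure

variable {K H} {F Finv : H ⊗[K] H}

lemma twistComul_apply (ξ : H) : twistComul K H F Finv ξ = F * (ΔH K H ξ * Finv) := rfl

lemma twistComul_mul (h : Finv * F = 1) (ξ ζ : H) :
    twistComul K H F Finv (ξ * ζ) = twistComul K H F Finv ξ * twistComul K H F Finv ζ := by
  simp only [twistComul_apply, ΔH, Bialgebra.comul_mul, mul_assoc]
  rw [← mul_assoc Finv F, h, one_mul]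

lemma twistComul_one (h : F * Finv = 1) : twistComul K H F Finv 1 = 1 := by
  rw [twistComul_apply, ΔH, Bialgebra.comul_one, one_mul, h]

lemma counitLeft_comp_twistComul (hF : IsTwist K H F Finv) :
    counitLeft K H ∘ₗ twistComul K H F Finv = LinearMap.id := LinearMap.ext fun ξ => by
  rw [LinearMap.comp_apply, twistComul_apply, counitLeft_mul, counitLeft_mul, hF.counit_left,
    hF.counitLeft_inv, counitLeft_comul, one_mul, mul_one, LinearMap.id_apply]

lemma counitRight_comp_twistComul (hF : IsTwist K H F Finv) :
    counitRight K H ∘ₗ twistComul K H F Finv = LinearMap.id := LinearMap.ext fun ξ => by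
  rw [LinearMap.comp_apply, twistComul_apply, counitRight_mul, counitRight_mul, hF.counit_right,
    hF.counitRight_inv, counitRight_comul, one_mul, mul_one, LinearMap.id_apply]

lemma assoc_rTensor_twistComul (W : H ⊗[K] H) :
    TensorProduct.assoc K H H H ((twistComul K H F Finv).rTensor H W) =
      ins3 K H F * comulLeft K H W * ins3 K H Finv := by
  induction W using TensorProduct.induction_on with
  | zero => simp
  | add W₁ W₂ h₁ h₂ => simp only [map_add, mul_add, add_mul, h₁, h₂]
  | tmul a b =>
    have hsplit : (F * (ΔH K H a * Finv)) ⊗ₜ[K] b =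
        (F ⊗ₜ (1 : H)) * ((ΔH K H a ⊗ₜ b) * (Finv ⊗ₜ (1 : H))) := by
      simp [Algebra.TensorProduct.tmul_mul_tmul]
    rw [LinearMap.rTensor_tmul, twistComul_apply, hsplit, assoc_mul, assoc_mul, assoc_tmul_one,
      assoc_tmul_one, mul_assoc]
    rfl

lemma lTensor_twistComul (W : H ⊗[K] H) :
    (twistComul K H F Finv).lTensor H W = ins1 K H F * comulRight K H W * ins1 K H Finv := by
  induction W using TensorProduct.induction_on with
  | zero => simp
  | add W₁ W₂ h₁ h₂ => simp only [map_add, mul_add, add_mul, h₁, h₂]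
  | tmul a b =>
    simp [twistComul_apply, ins1, comulRight, Algebra.TensorProduct.tmul_mul_tmul, ΔH, mul_assoc]

lemma twistComul_coassoc (hF : IsTwist K H F Finv) :
    (TensorProduct.assoc K H H H).toLinearMap ∘ₗ
        (twistComul K H F Finv).rTensor H ∘ₗ twistComul K H F Finv =
      (twistComul K H F Finv).lTensor H ∘ₗ twistComul K H F Finv := LinearMap.ext fun ξ => by
  have coassoc : comulLeft K H (ΔH K H ξ) = comulRight K H (ΔH K H ξ) :=
    Coalgebra.coassoc_apply ξ
  simp only [LinearMap.comp_apply, LinearEquiv.coe_coe]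
  rw [assoc_rTensor_twistComul, lTensor_twistComul, twistComul_apply, comulLeft_mul,
    comulLeft_mul, comulRight_mul, comulRight_mul, coassoc]
  calc _ = ins3 K H F * comulLeft K H F * comulRight K H (ΔH K H ξ) *
        (comulLeft K H Finv * ins3 K H Finv) := by simp only [mul_assoc]
    _ = ins1 K H F * comulRight K H F * comulRight K H (ΔH K H ξ) *
        (comulRight K H Finv * ins1 K H Finv) := by rw [hF.cocycle, hF.cocycle_inv]
    _ = _ := by simp only [mul_assoc]

lemma mul_twistAntipode_rTensor (Z : H ⊗[K] H) :
    muH K H ((twistAntipode K H F Finv).rTensor H Z) =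
      chi K H F * antipodeMulMul (chiInv K H Finv) Z := by
  induction Z using TensorProduct.induction_on with
  | zero => simp
  | add Z₁ Z₂ h₁ h₂ => simp only [map_add, mul_add, h₁, h₂]
  | tmul x y => simp [twistAntipode, muH, SH, mul_assoc]

lemma mul_twistAntipode_lTensor (Z : H ⊗[K] H) :
    muH K H ((twistAntipode K H F Finv).lTensor H Z) =
      mulMulAntipode (chi K H F) Z * chiInv K H Finv := by
  induction Z using TensorProduct.induction_on with
  | zero => simp
  | add Z₁ Z₂ h₁ h₂ => simp only [map_add, add_mul, h₁, h₂]
  | tmul x y => simp [twistAntipode, muH, SH, mul_assoc]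

lemma mul_twistAntipode_rTensor_twistComul (hF : IsTwist K H F Finv) (ξ : H) :
    muH K H ((twistAntipode K H F Finv).rTensor H (twistComul K H F Finv ξ)) =
      algebraMap K H (εH K H ξ) := by
  have hcancel : antipodeMulMul (chiInv K H Finv) F = 1 := by
    rw [chiInv_eq_antipodeMulMul, ← antipodeMulMul_mul, hF.inv_mul, antipodeMulMul_one_right]
  rw [mul_twistAntipode_rTensor, twistComul_apply, antipodeMulMul_mul, antipodeMulMul_mul, hcancel,
    ΔH, antipodeMulMul_one_comul, antipodeMulMul_algebraMap, ← chiInv_eq_antipodeMulMul,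
    mul_smul_comm, hF.chi_mul_chiInv, Algebra.algebraMap_eq_smul_one]
  rfl

lemma mul_twistAntipode_lTensor_twistComul (hF : IsTwist K H F Finv) (ξ : H) :
    muH K H ((twistAntipode K H F Finv).lTensor H (twistComul K H F Finv ξ)) =
      algebraMap K H (εH K H ξ) := by
  have hcancel : mulMulAntipode (chi K H F) Finv = 1 := by
    rw [chi_eq_mulMulAntipode, ← mulMulAntipode_mul, hF.inv_mul, mulMulAntipode_one_right]
  rw [mul_twistAntipode_lTensor, twistComul_apply, mulMulAntipode_mul, mulMulAntipode_mul, hcancel,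
    ΔH, mulMulAntipode_one_comul, mulMulAntipode_algebraMap, ← chi_eq_mulMulAntipode,
    smul_mul_assoc, hF.chi_mul_chiInv, Algebra.algebraMap_eq_smul_one]
  rfl

end TwistedStructure

/-- the twisted structure `(H, μ, Δ^F, S^F, ε)` satisfies all the
Hopf algebra axioms (coassociativity, counit axioms, `Δ^F` and the counit are
algebra maps, `χ` is invertible with inverse `χ⁻¹`, and `S^F` satisfies the
antipode axioms for `Δ^F`). -/
theorem twisted_hopf_algebra (F Finv : H ⊗[K] H) (hF : IsTwist K H F Finv) :
    -- coassociativity of Δ^F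
    ((TensorProduct.assoc K H H H).toLinearMap ∘ₗ
        (twistComul K H F Finv).rTensor H ∘ₗ twistComul K H F Finv
      = (twistComul K H F Finv).lTensor H ∘ₗ twistComul K H F Finv)
    -- counit axioms for Δ^F (with the original counit ε)
    ∧ (counitLeft K H ∘ₗ twistComul K H F Finv = LinearMap.id)
    ∧ (counitRight K H ∘ₗ twistComul K H F Finv = LinearMap.id)
    -- Δ^F is an algebra homomorphism
    ∧ (∀ ξ ζ : H, twistComul K H F Finv (ξ * ζ)
        = twistComul K H F Finv ξ * twistComul K H F Finv ζ)
    ∧ (twistComul K H F Finv 1 = 1)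
    -- χ is invertible with inverse χ⁻¹
    ∧ (chi K H F * chiInv K H Finv = 1)
    ∧ (chiInv K H Finv * chi K H F = 1)
    -- antipode axioms for S^F
    ∧ (∀ ξ : H, muH K H ((twistAntipode K H F Finv).rTensor H (twistComul K H F Finv ξ))
        = algebraMap K H (εH K H ξ))
    ∧ (∀ ξ : H, muH K H ((twistAntipode K H F Finv).lTensor H (twistComul K H F Finv ξ))
        = algebraMap K H (εH K H ξ)) :=
  ⟨twistComul_coassoc hF, counitLeft_comp_twistComul hF, counitRight_comp_twistComul hF,
    twistComul_mul hF.inv_mul, twistComul_one hF.mul_inv, hF.chi_mul_chiInv, hF.chiInv_mul_chi,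
    mul_twistAntipode_rTensor_twistComul hF, mul_twistAntipode_lTensor_twistComul hF⟩

end TwistPaper
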